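/- Let x ∈ L²(𝕋) have Fourier coefficients x̂(n) = 0 for all n ≤ 0. In H := L²(𝕋, ℂ²), let W be the smallest closed subspace that contains the two vectors (1, 0) and (conj(x), 1) (where conj(x) is the pointwise complex conjugate of x) and is invariant under the operator M_z of multiplication by the coordinate function z. Then: (i) ⋂_{k≥0} M_z^k W = {0}; and (ii) ⋃_{k≥0} M_z^{-k} W is dense in H. -/

import Mathlib

/-!
Multiplication by `z` is a unitary `U` on `H`, and `⟪Uⁿ v, f⟫` is the `n`-th Fourier coefficient
of the scalar function `t ↦ ⟪v t, f t⟫`. For `v = (0, 1)` and for `v = (1, -x)` this function is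
a.e. constant when `f` is either generator, so the closed `U`-invariant subspace of vectors whose
negative coefficients against `v` vanish contains `W`. A vector lying in every `Uᵏ W` then has all
coefficients of `f₁` and of `f₀ - conj x · f₁` equal to zero, hence vanishes. Dually, a vector
orthogonal to every `U⁻ᵏ W` is orthogonal to `Uⁿ (1, 0)` and `Uⁿ (conj x, 1)` for all `n ∈ ℤ`,
which kills first the coefficients of `f₀` and then those of `f₁`.
-/

open MeasureTheory AddCircle

noncomputable section

local instance : Fact (0 < 2 * Real.pi) := ⟨by positivity⟩

/-- The circle, realized as `ℝ / 2πℤ`, with its normalized Haar measure `haarAddCircle`. -/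
abbrev 𝕋c : Type := AddCircle (2 * Real.pi)

/-- `ℂ²`. -/
abbrev E2 : Type := EuclideanSpace ℂ (Fin 2)

/-- `H = L²(𝕋, ℂ²)`. -/
abbrev Hsp : Type := Lp E2 2 (@haarAddCircle (2 * Real.pi) _)

/-- The smallest closed subspace of `H` containing `w₁` and `w₂` and invariant under the
operator `Mz`. -/
def smallestInvariant (Mz : Hsp →L[ℂ] Hsp) (w1 w2 : Hsp) : Submodule ℂ Hsp :=
  sInf {K : Submodule ℂ Hsp |
    IsClosed (K : Set Hsp) ∧ (∀ f ∈ K, Mz f ∈ K) ∧ w1 ∈ K ∧ w2 ∈ K}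

open scoped InnerProductSpace ComplexConjugate

namespace Unitary

variable {𝕜 E : Type*} [RCLike 𝕜] [NormedAddCommGroup E] [InnerProductSpace 𝕜 E] [CompleteSpace E]

theorem zpow_add_apply (U : unitary (E →L[𝕜] E)) (m n : ℤ) (v : E) :
    (↑(U ^ (m + n)) : E →L[𝕜] E) v = (↑(U ^ m) : E →L[𝕜] E) ((↑(U ^ n) : E →L[𝕜] E) v) := by
  rw [zpow_add, Submonoid.coe_mul, mul_apply_eq_comp]

theorem inner_zpow_map_zpow (U : unitary (E →L[𝕜] E)) (m n : ℤ) (v f : E) :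
    ⟪(↑(U ^ m) : E →L[𝕜] E) v, (↑(U ^ n) : E →L[𝕜] E) f⟫_𝕜 =
      ⟪(↑(U ^ (m - n)) : E →L[𝕜] E) v, f⟫_𝕜 := by
  rw [← inner_map_map (U ^ n) ((↑(U ^ (m - n)) : E →L[𝕜] E) v) f, ← zpow_add_apply,
    add_sub_cancel]

theorem zpow_apply_apply (U : unitary (E →L[𝕜] E)) (n : ℤ) (v : E) :
    (↑(U ^ n) : E →L[𝕜] E) ((U : E →L[𝕜] E) v) = (↑(U ^ (n + 1)) : E →L[𝕜] E) v := by
  rw [zpow_add_apply, zpow_one]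

/-- Relative to the unitary `U` and the vector `v`, the number `⟪U ^ n v, f⟫` plays the role of
the `n`-th Fourier coefficient of `f`; this is the subspace where the negative ones vanish (for
`U` the shift on `L²(𝕋)` and `v = 1` it is the Hardy space `H²`). -/
def hardySubspace (U : unitary (E →L[𝕜] E)) (v : E) : Submodule 𝕜 E :=
  ⨅ (n : ℤ) (_ : n < 0), (𝕜 ∙ (↑(U ^ n) : E →L[𝕜] E) v)ᗮ

variable {U : unitary (E →L[𝕜] E)} {v : E}

theorem mem_hardySubspace_iff {f : E} :
    f ∈ hardySubspace U v ↔ ∀ n : ℤ, n < 0 → ⟪(↑(U ^ n) : E →L[𝕜] E) v, f⟫_𝕜 = 0 := by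
  simp only [hardySubspace, Submodule.mem_iInf, Submodule.mem_orthogonal_singleton_iff_inner_right]

theorem isClosed_hardySubspace : IsClosed (hardySubspace U v : Set E) := by
  simp only [hardySubspace, Submodule.coe_iInf]
  exact isClosed_iInter fun n => isClosed_iInter fun _ => Submodule.isClosed_orthogonal _

theorem map_mem_hardySubspace {f : E} (hf : f ∈ hardySubspace U v) :
    (U : E →L[𝕜] E) f ∈ hardySubspace U v := by
  refine mem_hardySubspace_iff.mpr fun n hn => ?_
  simpa only [zpow_one, ← inner_zpow_map_zpow U n 1 v f] using
    mem_hardySubspace_iff.mp hf (n - 1) (by omega)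

theorem inner_zpow_eq_zero_of_mem_iInter {W : Submodule 𝕜 E} (hW : W ≤ hardySubspace U v)
    {f : E} (hf : f ∈ ⋂ k : ℕ, ⇑((U : E →L[𝕜] E) ^ k) '' (W : Set E)) (n : ℤ) :
    ⟪(↑(U ^ n) : E →L[𝕜] E) v, f⟫_𝕜 = 0 := by
  obtain ⟨g, hg, rfl⟩ := Set.mem_iInter.mp hf (n.natAbs + 1)
  rw [← SubmonoidClass.coe_pow, ← zpow_natCast, inner_zpow_map_zpow]
  exact mem_hardySubspace_iff.mp (hW hg) _ (by omega)

theorem zpow_natCast_apply_mem {W : Submodule 𝕜 E} (hW : ∀ w ∈ W, (U : E →L[𝕜] E) w ∈ W)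
    (k : ℕ) {w : E} (hw : w ∈ W) : (↑(U ^ (k : ℤ)) : E →L[𝕜] E) w ∈ W := by
  induction k generalizing w with
  | zero => simpa using hw
  | succ k ih =>
    rw [Nat.cast_succ, ← zpow_apply_apply]
    exact ih (hW w hw)

theorem dense_iUnion_inv_pow_image {W : Submodule 𝕜 E} (hW : ∀ w ∈ W, (U : E →L[𝕜] E) w ∈ W)
    (h : ∀ f : E, (∀ n : ℤ, ∀ w ∈ W, ⟪(↑(U ^ n) : E →L[𝕜] E) w, f⟫_𝕜 = 0) → f = 0) :
    Dense (⋃ k : ℕ, ⇑((↑U⁻¹ : E →L[𝕜] E) ^ k) '' (W : Set E)) := by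
  have hpow : ∀ (k : ℕ) w, ((↑U⁻¹ : E →L[𝕜] E) ^ k) w = (↑(U ^ (-k : ℤ)) : E →L[𝕜] E) w := by
    intro k w
    rw [zpow_neg, zpow_natCast, ← inv_pow, SubmonoidClass.coe_pow]
  set V : ℕ → Submodule 𝕜 E := fun k => W.map ((↑(U ^ (-k : ℤ)) : E →L[𝕜] E) : E →ₗ[𝕜] E)
  have hV : Monotone V := by
    refine monotone_nat_of_le_succ fun k => ?_
    rintro _ ⟨w, hw, rfl⟩
    refine ⟨(U : E →L[𝕜] E) w, hW w hw, ?_⟩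
    rw [ContinuousLinearMap.coe_coe, zpow_apply_apply]
    congr 3
    omega
  have hunion : (⋃ k : ℕ, ⇑((↑U⁻¹ : E →L[𝕜] E) ^ k) '' (W : Set E)) = ↑(⨆ k, V k) := by
    rw [Submodule.coe_iSup_of_directed V hV.directed_le]
    refine Set.iUnion_congr fun k => ?_
    ext f
    simp [V, hpow]
  rw [hunion, Submodule.dense_iff_topologicalClosure_eq_top,
    Submodule.topologicalClosure_eq_top_iff, Submodule.eq_bot_iff]
  intro f hf
  refine h f fun n w hw => (Submodule.mem_orthogonal _ f).mp hf _ ?_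
  refine Submodule.mem_iSup_of_mem (-n).toNat
    ⟨(↑(U ^ (n.toNat : ℤ)) : E →L[𝕜] E) w, zpow_natCast_apply_mem hW n.toNat hw, ?_⟩
  rw [ContinuousLinearMap.coe_coe, ← zpow_add_apply]
  congr 3
  omega

end Unitary

section Circle

variable {T : ℝ} [Fact (0 < T)]

theorem ae_eq_zero_of_fourierCoeff_eq_zero {g : AddCircle T → ℂ} (hg : MemLp g 2 haarAddCircle)
    (h : ∀ n, fourierCoeff g n = 0) : g =ᵐ[haarAddCircle] 0 := by
  have hzero : hg.toLp g = 0 := fourierBasis.repr.injective <| by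
    ext n
    rw [fourierBasis_repr, fourierCoeff_congr_ae hg.coeFn_toLp, h, map_zero]
    rfl
  exact hg.coeFn_toLp.symm.trans (hzero ▸ Lp.coeFn_zero _ _ _)

theorem fourierCoeff_const (c : ℂ) {n : ℤ} (hn : n ≠ 0) :
    fourierCoeff (fun _ : AddCircle T => c) n = 0 := by
  have hone : (fun _ : AddCircle T => c) = fun t => c * fourier 0 t :=
    funext fun _ => by rw [fourier_zero, mul_one]
  rw [hone, fourierCoeff.const_mul, fourierCoeff_fourier, Pi.single_apply, if_neg hn, mul_zero]

variable {E : Type*} [NormedAddCommGroup E] [InnerProductSpace ℂ E]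

local notation "𝓛²" => Lp E 2 (haarAddCircle (T := T))

theorem inner_eq_fourierCoeff_of_ae_eq {g h : 𝓛²} {n : ℤ}
    (hh : h =ᵐ[haarAddCircle] fun t => fourier n t • g t) (f : 𝓛²) :
    ⟪h, f⟫_ℂ = fourierCoeff (fun t => ⟪g t, f t⟫_ℂ) n := by
  rw [L2.inner_def, fourierCoeff]
  refine integral_congr_ae ?_
  filter_upwards [hh] with t ht
  rw [ht, inner_smul_left, ← fourier_neg, smul_eq_mul]

theorem mul_eq_one_of_ae_eq_fourier_smul {A B : 𝓛² →L[ℂ] 𝓛²} {m : ℤ}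
    (hA : ∀ f, ⇑(A f) =ᵐ[haarAddCircle] fun t => fourier m t • f t)
    (hB : ∀ f, ⇑(B f) =ᵐ[haarAddCircle] fun t => fourier (-m) t • f t) : A * B = 1 := by
  ext1 f
  refine Lp.ext ?_
  filter_upwards [hA (B f), hB f] with t hA hB
  rw [mul_apply_eq_comp, one_apply_eq_self, hA, hB, smul_smul, ← fourier_add,
    add_neg_cancel, fourier_zero, one_smul]

variable [CompleteSpace E]

theorem exists_unitary_of_ae_eq_fourier_smul (S S' : 𝓛² →L[ℂ] 𝓛²)
    (hS : ∀ f, ⇑(S f) =ᵐ[haarAddCircle] fun t => fourier 1 t • f t)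
    (hS' : ∀ f, ⇑(S' f) =ᵐ[haarAddCircle] fun t => fourier (-1) t • f t) :
    ∃ U : unitary (𝓛² →L[ℂ] 𝓛²), ↑U = S ∧ ↑U⁻¹ = S' := by
  have hadj : S' = star S := by
    rw [ContinuousLinearMap.star_eq_adjoint]
    refine (ContinuousLinearMap.eq_adjoint_iff S' S).mpr fun a b => ?_
    rw [L2.inner_def, L2.inner_def]
    refine integral_congr_ae ?_
    filter_upwards [hS b, hS' a] with t hb ha
    rw [ha, hb, inner_smul_left, inner_smul_right, fourier_neg, RCLike.conj_conj]
  refine ⟨⟨S, Unitary.mem_iff.mpr ⟨?_, ?_⟩⟩, rfl, ?_⟩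
  · rw [← hadj]
    exact mul_eq_one_of_ae_eq_fourier_smul hS' (by simpa using hS)
  · rw [← hadj]
    exact mul_eq_one_of_ae_eq_fourier_smul hS hS'
  · rw [← Unitary.star_eq_inv, Unitary.coe_star]
    exact hadj.symm

theorem coe_zpow_apply_ae_eq (U : unitary (𝓛² →L[ℂ] 𝓛²))
    (hU : ∀ f, ⇑((U : 𝓛² →L[ℂ] 𝓛²) f) =ᵐ[haarAddCircle] fun t => fourier 1 t • f t)
    (hU' : ∀ f, ⇑((↑U⁻¹ : 𝓛² →L[ℂ] 𝓛²) f) =ᵐ[haarAddCircle] fun t => fourier (-1) t • f t)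
    (n : ℤ) (f : 𝓛²) :
    ⇑((↑(U ^ n) : 𝓛² →L[ℂ] 𝓛²) f) =ᵐ[haarAddCircle] fun t => fourier n t • f t := by
  induction n using Int.induction_on generalizing f with
  | zero => exact Filter.Eventually.of_forall fun t => by simp
  | succ n ih =>
    rw [Unitary.zpow_add_apply, zpow_one]
    filter_upwards [ih _, hU f] with t h1 h2
    rw [h1, h2, smul_smul, ← fourier_add]
  | pred n ih =>
    rw [sub_eq_add_neg, Unitary.zpow_add_apply, zpow_neg_one]
    filter_upwards [ih _, hU' f] with t h1 h2
    rw [h1, h2, smul_smul, ← fourier_add]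

end Circle

section Coordinates

variable {α ι : Type*} [MeasurableSpace α] {μ : Measure α} [Fintype ι]

theorem memLp_apply (f : Lp (EuclideanSpace ℂ ι) 2 μ) (i : ι) : MemLp (fun t => f t i) 2 μ :=
  (Lp.memLp f).continuousLinearMap_comp (EuclideanSpace.proj (𝕜 := ℂ) i)

theorem eq_zero_of_ae_apply_eq_zero {f : Lp (EuclideanSpace ℂ ι) 2 μ}
    (h : ∀ i, (fun t => f t i) =ᵐ[μ] 0) : f = 0 := by
  refine Lp.ext ?_
  filter_upwards [ae_all_iff.mpr h, Lp.coeFn_zero (EuclideanSpace ℂ ι) 2 μ] with t ht hz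
  rw [hz]
  ext i
  exact ht i

end Coordinates

theorem inner_fin_two (v w : E2) : ⟪v, w⟫_ℂ = conj (v 0) * w 0 + conj (v 1) * w 1 := by
  simp [PiLp.inner_apply, Fin.sum_univ_two, mul_comm]

section SmallestInvariant

variable {Mz : Hsp →L[ℂ] Hsp} {w1 w2 : Hsp}

theorem left_mem_smallestInvariant : w1 ∈ smallestInvariant Mz w1 w2 :=
  Submodule.mem_sInf.mpr fun _ hK => hK.2.2.1

theorem right_mem_smallestInvariant : w2 ∈ smallestInvariant Mz w1 w2 :=
  Submodule.mem_sInf.mpr fun _ hK => hK.2.2.2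

theorem map_mem_smallestInvariant {f : Hsp} (hf : f ∈ smallestInvariant Mz w1 w2) :
    Mz f ∈ smallestInvariant Mz w1 w2 :=
  Submodule.mem_sInf.mpr fun K hK => hK.2.1 f (Submodule.mem_sInf.mp hf K hK)

theorem smallestInvariant_le {K : Submodule ℂ Hsp} (hK : IsClosed (K : Set Hsp))
    (hMz : ∀ f ∈ K, Mz f ∈ K) (h1 : w1 ∈ K) (h2 : w2 ∈ K) : smallestInvariant Mz w1 w2 ≤ K :=
  sInf_le ⟨hK, hMz, h1, h2⟩

end SmallestInvariant

local notation "μh" => @haarAddCircle (2 * Real.pi) _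

theorem smallestInvariant_le_hardySubspace {U : unitary (Hsp →L[ℂ] Hsp)}
    (hU : ∀ (n : ℤ) (f : Hsp), ⇑((↑(U ^ n) : Hsp →L[ℂ] Hsp) f) =ᵐ[μh] fun t => fourier n t • f t)
    {v w1 w2 : Hsp} (h1 : ∃ c : ℂ, (fun t => ⟪v t, w1 t⟫_ℂ) =ᵐ[μh] fun _ => c)
    (h2 : ∃ c : ℂ, (fun t => ⟪v t, w2 t⟫_ℂ) =ᵐ[μh] fun _ => c) :
    smallestInvariant U w1 w2 ≤ Unitary.hardySubspace U v := by
  have hmem : ∀ w : Hsp, (∃ c : ℂ, (fun t => ⟪v t, w t⟫_ℂ) =ᵐ[μh] fun _ => c) →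
      w ∈ Unitary.hardySubspace U v := by
    rintro w ⟨c, hc⟩
    refine Unitary.mem_hardySubspace_iff.mpr fun n hn => ?_
    rw [inner_eq_fourierCoeff_of_ae_eq (hU n v), fourierCoeff_congr_ae hc,
      fourierCoeff_const c hn.ne]
  exact smallestInvariant_le Unitary.isClosed_hardySubspace
    (fun _ => Unitary.map_mem_hardySubspace) (hmem w1 h1) (hmem w2 h2)

/-- The vector `(1, -x)`, pointwise orthogonal to `(conj x, 1)`. -/
def perpVec (x : Lp ℂ 2 μh) : Hsp :=
  Lp.const 2 μh (EuclideanSpace.single 0 1) -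
    (ContinuousLinearMap.toSpanSingleton ℂ (EuclideanSpace.single 1 1 : E2)).compLp x

theorem coeFn_perpVec (x : Lp ℂ 2 μh) :
    ⇑(perpVec x) =ᵐ[μh] fun t => EuclideanSpace.single 0 1 - x t • EuclideanSpace.single 1 1 := by
  filter_upwards [Lp.coeFn_sub (Lp.const 2 μh (EuclideanSpace.single 0 1 : E2)) _,
    Lp.coeFn_const 2 μh (EuclideanSpace.single 0 1 : E2),
    ContinuousLinearMap.coeFn_compLp'
      (ContinuousLinearMap.toSpanSingleton ℂ (EuclideanSpace.single 1 1 : E2)) x] with t h1 h2 h3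
  rw [perpVec, h1, Pi.sub_apply, h2, h3, Function.const_apply,
    ContinuousLinearMap.toSpanSingleton_apply]

theorem apply_ae_eq_zero_of_inner_zpow_eq_zero {U : unitary (Hsp →L[ℂ] Hsp)}
    (hU : ∀ (n : ℤ) (f : Hsp), ⇑((↑(U ^ n) : Hsp →L[ℂ] Hsp) f) =ᵐ[μh] fun t => fourier n t • f t)
    {v f : Hsp} {i : Fin 2} (hv : (fun t => ⟪v t, f t⟫_ℂ) =ᵐ[μh] fun t => f t i)
    (h : ∀ n : ℤ, ⟪(↑(U ^ n) : Hsp →L[ℂ] Hsp) v, f⟫_ℂ = 0) : (fun t => f t i) =ᵐ[μh] 0 :=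
  ae_eq_zero_of_fourierCoeff_eq_zero (memLp_apply f i) fun n => by
    rw [← fourierCoeff_congr_ae hv, ← inner_eq_fourierCoeff_of_ae_eq (hU n v), h]

theorem iInter_pow_image_smallestInvariant (x : Lp ℂ 2 μh) {w1 w2 : Hsp}
    (hw1 : (⇑w1 : 𝕋c → E2) =ᵐ[μh] fun _ => (WithLp.equiv 2 (Fin 2 → ℂ)).symm ![1, 0])
    (hw2 : (⇑w2 : 𝕋c → E2) =ᵐ[μh]
      fun t => (WithLp.equiv 2 (Fin 2 → ℂ)).symm ![starRingEnd ℂ (x t), 1])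
    {U : unitary (Hsp →L[ℂ] Hsp)}
    (hU : ∀ (n : ℤ) (f : Hsp), ⇑((↑(U ^ n) : Hsp →L[ℂ] Hsp) f) =ᵐ[μh] fun t => fourier n t • f t) :
    ⋂ k : ℕ, ⇑((U : Hsp →L[ℂ] Hsp) ^ k) '' (smallestInvariant U w1 w2 : Set Hsp) = {0} := by
  set u : Hsp := Lp.const 2 μh (EuclideanSpace.single 1 1)
  have hu : ⇑u =ᵐ[μh] fun _ => EuclideanSpace.single 1 1 := Lp.coeFn_const _ _ _
  have hv := coeFn_perpVec x
  have hWu : smallestInvariant U w1 w2 ≤ Unitary.hardySubspace U u :=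
    smallestInvariant_le_hardySubspace hU
      ⟨0, by filter_upwards [hu, hw1] with t h h'; simp [h, h', inner_fin_two]⟩
      ⟨1, by filter_upwards [hu, hw2] with t h h'; simp [h, h', inner_fin_two]⟩
  have hWv : smallestInvariant U w1 w2 ≤ Unitary.hardySubspace U (perpVec x) :=
    smallestInvariant_le_hardySubspace hU
      ⟨1, by filter_upwards [hv, hw1] with t h h'; simp [h, h', inner_fin_two]⟩
      ⟨0, by filter_upwards [hv, hw2] with t h h'; simp [h, h', inner_fin_two]⟩
  refine Set.eq_singleton_iff_unique_mem.mpr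
    ⟨Set.mem_iInter.mpr fun k => ⟨0, Submodule.zero_mem _, map_zero _⟩, fun f hf => ?_⟩
  have hf1 : (fun t => f t 1) =ᵐ[μh] 0 :=
    apply_ae_eq_zero_of_inner_zpow_eq_zero hU
      (by filter_upwards [hu] with t h; simp [h, inner_fin_two])
      (Unitary.inner_zpow_eq_zero_of_mem_iInter hWu hf)
  have hf0 : (fun t => f t 0) =ᵐ[μh] 0 :=
    apply_ae_eq_zero_of_inner_zpow_eq_zero hU
      (by filter_upwards [hv, hf1] with t h h'; simp [h, h', inner_fin_two])
      (Unitary.inner_zpow_eq_zero_of_mem_iInter hWv hf)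
  exact eq_zero_of_ae_apply_eq_zero fun i => by fin_cases i; exacts [hf0, hf1]

theorem dense_iUnion_inv_pow_image_smallestInvariant (x : Lp ℂ 2 μh) {w1 w2 : Hsp}
    (hw1 : (⇑w1 : 𝕋c → E2) =ᵐ[μh] fun _ => (WithLp.equiv 2 (Fin 2 → ℂ)).symm ![1, 0])
    (hw2 : (⇑w2 : 𝕋c → E2) =ᵐ[μh]
      fun t => (WithLp.equiv 2 (Fin 2 → ℂ)).symm ![starRingEnd ℂ (x t), 1])
    {U : unitary (Hsp →L[ℂ] Hsp)}
    (hU : ∀ (n : ℤ) (f : Hsp), ⇑((↑(U ^ n) : Hsp →L[ℂ] Hsp) f) =ᵐ[μh] fun t => fourier n t • f t) :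
    Dense (⋃ k : ℕ, ⇑((↑U⁻¹ : Hsp →L[ℂ] Hsp) ^ k) '' (smallestInvariant U w1 w2 : Set Hsp)) := by
  refine Unitary.dense_iUnion_inv_pow_image (fun _ => map_mem_smallestInvariant) fun f hf => ?_
  have hf0 : (fun t => f t 0) =ᵐ[μh] 0 :=
    apply_ae_eq_zero_of_inner_zpow_eq_zero hU
      (by filter_upwards [hw1] with t h; simp [h, inner_fin_two])
      (fun n => hf n w1 left_mem_smallestInvariant)
  have hf1 : (fun t => f t 1) =ᵐ[μh] 0 :=
    apply_ae_eq_zero_of_inner_zpow_eq_zero hU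
      (by filter_upwards [hw2, hf0] with t h h'; simp [h, h', inner_fin_two])
      (fun n => hf n w2 right_mem_smallestInvariant)
  exact eq_zero_of_ae_apply_eq_zero fun i => by fin_cases i; exacts [hf0, hf1]

theorem stmt10_general (x : Lp ℂ 2 (@haarAddCircle (2 * Real.pi) _))
    (w1 w2 : Hsp)
    (hw1 : (⇑w1 : 𝕋c → E2) =ᵐ[@haarAddCircle (2 * Real.pi) _]
      fun _ => (WithLp.equiv 2 (Fin 2 → ℂ)).symm ![1, 0])
    (hw2 : (⇑w2 : 𝕋c → E2) =ᵐ[@haarAddCircle (2 * Real.pi) _]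
      fun t => (WithLp.equiv 2 (Fin 2 → ℂ)).symm ![starRingEnd ℂ (x t), 1])
    (Mz Mzinv : Hsp →L[ℂ] Hsp)
    (hMz : ∀ f : Hsp, (⇑(Mz f) : 𝕋c → E2) =ᵐ[@haarAddCircle (2 * Real.pi) _]
      fun t => (fourier 1 t : ℂ) • f t)
    (hMzinv : ∀ f : Hsp, (⇑(Mzinv f) : 𝕋c → E2) =ᵐ[@haarAddCircle (2 * Real.pi) _]
      fun t => (fourier (-1) t : ℂ) • f t) :
    (⋂ k : ℕ, ⇑(Mz ^ k) '' ((smallestInvariant Mz w1 w2 : Submodule ℂ Hsp) : Set Hsp))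
        = {0} ∧
    Dense (⋃ k : ℕ, ⇑(Mzinv ^ k) '' ((smallestInvariant Mz w1 w2 : Submodule ℂ Hsp) : Set Hsp)) := by
  obtain ⟨U, rfl, rfl⟩ := exists_unitary_of_ae_eq_fourier_smul Mz Mzinv hMz hMzinv
  have hU := coe_zpow_apply_ae_eq U hMz hMzinv
  exact ⟨iInter_pow_image_smallestInvariant x hw1 hw2 hU,
    dense_iUnion_inv_pow_image_smallestInvariant x hw1 hw2 hU⟩

/-- Let `x ∈ L²(𝕋)` with `x̂(n) = 0` for all `n ≤ 0`, and let `W` be the smallest closed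
`M_z`-invariant subspace of `H = L²(𝕋, ℂ²)` containing `(1, 0)` and `(conj x, 1)`. Then
`⋂_{k≥0} M_z^k W = {0}` and `⋃_{k≥0} M_z^{-k} W` is dense in `H`.  Here `M_z` is
multiplication by the coordinate function `z` (i.e. by `fourier 1`) and `M_z^{-1}` is
multiplication by `z^{-1}` (i.e. by `fourier (-1)`). -/
theorem stmt10 (x : Lp ℂ 2 (@haarAddCircle (2 * Real.pi) _))
    (hx : ∀ n : ℤ, n ≤ 0 → fourierCoeff (⇑x : 𝕋c → ℂ) n = 0)
    (w1 w2 : Hsp)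
    (hw1 : (⇑w1 : 𝕋c → E2) =ᵐ[@haarAddCircle (2 * Real.pi) _]
      fun _ => (WithLp.equiv 2 (Fin 2 → ℂ)).symm ![1, 0])
    (hw2 : (⇑w2 : 𝕋c → E2) =ᵐ[@haarAddCircle (2 * Real.pi) _]
      fun t => (WithLp.equiv 2 (Fin 2 → ℂ)).symm ![starRingEnd ℂ (x t), 1])
    (Mz Mzinv : Hsp →L[ℂ] Hsp)
    (hMz : ∀ f : Hsp, (⇑(Mz f) : 𝕋c → E2) =ᵐ[@haarAddCircle (2 * Real.pi) _]
      fun t => (fourier 1 t : ℂ) • f t)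
    (hMzinv : ∀ f : Hsp, (⇑(Mzinv f) : 𝕋c → E2) =ᵐ[@haarAddCircle (2 * Real.pi) _]
      fun t => (fourier (-1) t : ℂ) • f t) :
    (⋂ k : ℕ, ⇑(Mz ^ k) '' ((smallestInvariant Mz w1 w2 : Submodule ℂ Hsp) : Set Hsp))
        = {0} ∧
    Dense (⋃ k : ℕ, ⇑(Mzinv ^ k) '' ((smallestInvariant Mz w1 w2 : Submodule ℂ Hsp) : Set Hsp)) :=
  stmt10_general x w1 w2 hw1 hw2 Mz Mzinv hMz hMzinv

end
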